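/- Let $p:E\to X$ be a covering map of degree $k$ between convenient spaces. The assignment $x\mapsto p^{-1}(x)$ defines a continuous map $p^{-1}:X\to\mathrm{Sym}^k(E)$, where $\mathrm{Sym}^k(E)=E^k/\Sigma_k$ is the $k$th symmetric power with the quotient topology of the (convenient) $k$-fold product. -/

import Mathlib

open scoped unitInterval

noncomputable section

universe u v


/-- Presentations of probability measures with finite support: a tuple of points
together with a point of the standard simplex. This is the disjoint union
`⨆ₙ Xⁿ × Δ^{n-1}`. -/
def PreProb (X : Type u) [TopologicalSpace X] : Type u :=
  Σ n : ℕ, (Fin (n + 1) → X) × (stdSimplex ℝ (Fin (n + 1)))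

instance (X : Type u) [TopologicalSpace X] : TopologicalSpace (PreProb X) :=
  inferInstanceAs (TopologicalSpace (Σ n : ℕ, (Fin (n + 1) → X) × (stdSimplex ℝ (Fin (n + 1)))))

/-- The space of probability measures with finite support, encoded as finitely
supported real-valued functions that are nonnegative and sum to `1`.  Its topology
(defined below) is coinduced from the space of presentations, i.e. it is the quotient
topology of the paper. -/
def FinProb (X : Type u) [TopologicalSpace X] : Type u :=
  { w : X →₀ ℝ // (∀ x, 0 ≤ w x) ∧ w.sum (fun _ t => t) = 1 }

/-- The quotient map from presentations to finitely supported probability measures,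
`(x₁,…,xₙ,t₁,…,tₙ) ↦ ∑ tᵢ δ_{xᵢ}`. -/
def PreProb.toFinProb {X : Type u} [TopologicalSpace X] (p : PreProb X) : FinProb X := by
  classical
  refine ⟨∑ i, Finsupp.single (p.2.1 i) ((p.2.2 : Fin (p.1 + 1) → ℝ) i), ?_, ?_⟩
  · intro x
    rw [Finsupp.finset_sum_apply]
    refine Finset.sum_nonneg fun i _ => ?_
    rw [Finsupp.single_apply]
    split
    · exact p.2.2.2.1 i
    · exact le_refl 0
  · rw [← Finsupp.sum_finset_sum_index (fun _ => rfl) (fun _ _ _ => rfl)]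
    simpa [Finsupp.sum_single_index] using p.2.2.2.2

/-- The quotient topology on the space of probability measures with finite support. -/
instance FinProb.instTopologicalSpace (X : Type u) [TopologicalSpace X] :
    TopologicalSpace (FinProb X) :=
  TopologicalSpace.coinduced PreProb.toFinProb inferInstance

/-- The weight that a finitely supported probability measure assigns to a point. -/
def FinProb.weight {X : Type u} [TopologicalSpace X] (μ : FinProb X) (x : X) : ℝ := μ.1 x

/-- The support of a finitely supported probability measure, as a finset. -/
def FinProb.supp {X : Type u} [TopologicalSpace X] (μ : FinProb X) : Finset X := μ.1.support

/-- `𝒫ₙ(X)`: the subspace of measures supported on at most `n` points. -/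
def FinProbLe (X : Type u) [TopologicalSpace X] (n : ℕ) : Set (FinProb X) :=
  { μ | μ.supp.card ≤ n }

/-- Covariant functoriality: the pushforward `f₊ : 𝒫(X) → 𝒫(Y)`,
`∑ tᵢ δ_{xᵢ} ↦ ∑ tᵢ δ_{f xᵢ}`. -/
def FinProb.map {X : Type u} {Y : Type v} [TopologicalSpace X] [TopologicalSpace Y]
    (f : X → Y) (μ : FinProb X) : FinProb Y := by
  classical
  refine ⟨Finsupp.mapDomain f μ.1, ?_, ?_⟩
  · intro y
    rw [Finsupp.mapDomain, Finsupp.sum_apply]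
    refine Finset.sum_nonneg fun x _ => ?_
    dsimp only
    rw [Finsupp.single_apply]
    split
    · exact μ.2.1 x
    · exact le_refl 0
  · rw [Finsupp.sum_mapDomain_index (fun _ => rfl) (fun _ _ _ => rfl)]
    exact μ.2.2

/-- The Dirac measure `δ_x`, i.e. the unit `η` of the monad `𝒫`. -/
def FinProb.dirac {X : Type u} [TopologicalSpace X] (x : X) : FinProb X := by
  classical
  refine ⟨Finsupp.single x 1, ?_, ?_⟩
  · intro y
    rw [Finsupp.single_apply]
    split
    · exact zero_le_one
    · exact le_refl 0
  · rw [Finsupp.sum_single_index rfl]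

/-- `𝒫(f)`: the space of `f`-relative probability measures of finite support, i.e. those
measures on `X` whose support is mapped by `f` to a single point of `Y`. -/
def FinProbRel {X : Type u} {Y : Type v} [TopologicalSpace X] (f : X → Y) :
    Set (FinProb X) :=
  { μ | ∃ y : Y, f '' ↑μ.supp = {y} }

/-- The projection `p : 𝒫(f) → Y`, sending a relative measure to the unique point of
`f(supp μ)`. -/
def FinProbRel.proj {X : Type u} {Y : Type v} [TopologicalSpace X] (f : X → Y)
    (μ : FinProbRel f) : Y :=
  Exists.choose μ.2

/-- The projection `𝒫(f) → Y` admits a continuous section with image in `𝒫_{n+1}(f)`. -/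
def HasAnalogSec {X : Type u} {Y : Type v} [TopologicalSpace X] [TopologicalSpace Y]
    (f : X → Y) (n : ℕ) : Prop :=
  ∃ s : Y → FinProbRel f, Continuous s ∧ (∀ y, FinProbRel.proj f (s y) = y) ∧
    ∀ y, (s y : FinProb X).supp.card ≤ n + 1

/-- The analog sectional category of a map: the least `n` such that the projection
`𝒫(f) → Y` admits a continuous section with image in `𝒫_{n+1}(f)` (`⊤` if there is
no such `n`). -/
def asecat {X : Type u} {Y : Type v} [TopologicalSpace X] [TopologicalSpace Y]
    (f : X → Y) : ℕ∞ :=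
  sInf { n : ℕ∞ | ∃ m : ℕ, (m : ℕ∞) = n ∧ HasAnalogSec f m }

/-- Evaluation of paths at the `r` equally spaced times `i/(r-1)`, `0 ≤ i < r`:
the fibration `π_X^r : X^{[0,1]} → X^r`. -/
def pathEval (X : Type u) [TopologicalSpace X] (r : ℕ) : C(I, X) → (Fin r → X) :=
  fun γ i => γ (Set.projIcc (0 : ℝ) 1 zero_le_one ((i : ℝ) / ((r : ℝ) - 1)))

/-- The based path space `(X, x₀)^{([0,1],{0})}`. -/
def BasedPaths (X : Type u) [TopologicalSpace X] (x₀ : X) : Type u :=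
  { γ : C(I, X) // γ 0 = x₀ }

instance (X : Type u) [TopologicalSpace X] (x₀ : X) : TopologicalSpace (BasedPaths X x₀) :=
  inferInstanceAs (TopologicalSpace { γ : C(I, X) // γ 0 = x₀ })

/-- Evaluation at `1` on the based path space. -/
def basedPathEval (X : Type u) [TopologicalSpace X] (x₀ : X) : BasedPaths X x₀ → X :=
  fun γ => γ.1 1

/-- The analog (LS-)category of a space. -/
def acat (X : Type u) [TopologicalSpace X] (x₀ : X) : ℕ∞ :=
  asecat (basedPathEval X x₀)

/-- The `r`-th sequential analog topological complexity; `ATC₁ = acat`. -/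
def ATC (X : Type u) [TopologicalSpace X] (x₀ : X) (r : ℕ) : ℕ∞ :=
  if r = 1 then acat X x₀ else asecat (pathEval X r)

/-- Classical sectional category data: `f` admits continuous sections over each of
`n + 1` open sets covering `Y`. -/
def HasSecCover {X : Type u} {Y : Type v} [TopologicalSpace X] [TopologicalSpace Y]
    (f : X → Y) (n : ℕ) : Prop :=
  ∃ U : Fin (n + 1) → Set Y, (∀ i, IsOpen (U i)) ∧ (⋃ i, U i) = Set.univ ∧
    ∀ i, ∃ s : U i → X, Continuous s ∧ ∀ y : U i, f (s y) = (y : Y)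

/-- The classical sectional category (Schwarz genus) of a map. -/
def secat {X : Type u} {Y : Type v} [TopologicalSpace X] [TopologicalSpace Y]
    (f : X → Y) : ℕ∞ :=
  sInf { n : ℕ∞ | ∃ m : ℕ, (m : ℕ∞) = n ∧ HasSecCover f m }

/-- The classical Lusternik–Schnirelmann category (normalized: `cat(point) = 0`). -/
def catLS (X : Type u) [TopologicalSpace X] (x₀ : X) : ℕ∞ :=
  secat (basedPathEval X x₀)

/-- The classical `r`-th sequential topological complexity. -/
def seqTC (X : Type u) [TopologicalSpace X] (x₀ : X) (r : ℕ) : ℕ∞ :=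
  if r = 1 then catLS X x₀ else secat (pathEval X r)

/-- The cohomological dimension of a group `G`: the least `n` (possibly `⊤`) such that the
group cohomology `Hᵏ(G; M)` vanishes for all `G`-modules `M` and all `k > n`. -/
def groupCd (G : Type) [Group G] : ℕ∞ :=
  sInf { n : ℕ∞ | ∀ (M : Rep ℤ G) (k : ℕ), n < (k : ℕ∞) → Subsingleton (groupCohomology M k) }

namespace RelativeCWComplex

open CategoryTheory Limits

/-- The `n`-dimensional sphere (as in the older Mathlib `Mathlib.Topology.CWComplex`). -/
def sphere (n : ℤ) : TopCat.{u} :=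
  TopCat.of <| ULift <| Metric.sphere (0 : EuclideanSpace ℝ <| Fin <| Int.toNat <| n + 1) 1

/-- The `n`-dimensional closed disk. -/
def disk (n : ℤ) : TopCat.{u} :=
  TopCat.of <| ULift <| Metric.closedBall (0 : EuclideanSpace ℝ <| Fin <| Int.toNat n) 1

/-- The inclusion map from the `n`-sphere to the `(n + 1)`-disk. -/
def sphereInclusion (n : ℤ) : sphere.{u} n ⟶ disk.{u} (n + 1) :=
  TopCat.ofHom ⟨fun x => ULift.up ⟨x.down.1, le_of_eq x.down.2⟩,
    continuous_uliftUp.comp ((continuous_subtype_val.comp continuous_uliftDown).subtype_mk _)⟩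

/-- The inclusion of the disjoint union of `n`-spheres into the disjoint union of
`(n + 1)`-disks. -/
def sigmaSphereInclusion (n : ℤ) (cells : Type) :
    (∐ fun (_ : cells) => sphere.{u} n) ⟶ (∐ fun (_ : cells) => disk.{u} (n + 1)) :=
  Limits.Sigma.map fun _ => sphereInclusion n

/-- The attaching map of the disjoint union of `n`-spheres. -/
def sigmaAttachMap (X : TopCat.{u}) (n : ℤ) (cells : Type)
    (attach_maps : cells → (sphere.{u} n ⟶ X)) : (∐ fun (_ : cells) => sphere.{u} n) ⟶ X :=
  Limits.Sigma.desc attach_maps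

/-- `X'` is obtained from `X` by attaching `(n + 1)`-disks. -/
structure AttachCells (X X' : TopCat.{u}) (n : ℤ) where
  cells : Type
  attach_maps : cells → (sphere.{u} n ⟶ X)
  iso_pushout : X' ≅ Limits.pushout (sigmaSphereInclusion n cells)
    (sigmaAttachMap X n cells attach_maps)

end RelativeCWComplex

/-- A relative CW-complex (the older Mathlib definition). -/
structure RelativeCWComplex (A : TopCat.{u}) where
  sk : ℕ → TopCat.{u}
  iso_sk_zero : A ≅ sk 0
  attach_cells (n : ℕ) : RelativeCWComplex.AttachCells (sk n) (sk (n + 1)) (n - 1)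

/-- A CW-complex is a relative CW-complex whose `(-1)`-skeleton is empty. -/
abbrev CWComplex := RelativeCWComplex.{u} (TopCat.of PEmpty)

namespace RelativeCWComplex

open CategoryTheory Limits

/-- The inclusion map from `X` to `X'` obtained by attaching cells. -/
def AttachCells.inclusion {X X' : TopCat.{u}} {n : ℤ} (att : AttachCells X X' n) :
    X ⟶ X' :=
  Limits.pushout.inr _ _ ≫ att.iso_pushout.inv

/-- The inclusion of one skeleton into the next. -/
def skInclusion {A : TopCat.{u}} (X : RelativeCWComplex A) (n : ℕ) :
    X.sk n ⟶ X.sk (n + 1) :=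
  (X.attach_cells n).inclusion

/-- The topology on a relative CW-complex. -/
def toTopCat {A : TopCat.{u}} (X : RelativeCWComplex A) : TopCat.{u} :=
  Limits.colimit (Functor.ofSequence (skInclusion X))

end RelativeCWComplex

/-- `B` (with basepoint `b`) is a classifying space for the discrete group `G`: a convenient
(compactly generated Hausdorff), path-connected, aspherical space with fundamental group `G`
and the homotopy type of a CW complex; this characterizes the geometric realization of the
nerve of `G` up to homotopy equivalence. -/
structure IsClassifyingSpace (G : Type) [Group G] (B : Type u) [TopologicalSpace B]
    (b : B) : Prop where
  t2 : T2Space B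
  compactlyGenerated : CompactlyGeneratedSpace B
  pathConnected : PathConnectedSpace B
  aspherical : ∀ n : ℕ, 2 ≤ n → Subsingleton (HomotopyGroup (Fin n) B b)
  pi1 : Nonempty (FundamentalGroup B b ≃* G)
  cwType : ∃ K : CWComplex.{u}, Nonempty (ContinuousMap.HomotopyEquiv B K.toTopCat)

/-- A covering map of degree `k`: every fiber has exactly `k` points. -/
def IsCoveringOfDegree {E : Type u} {X : Type v} [TopologicalSpace E] [TopologicalSpace X]
    (p : E → X) (k : ℕ) : Prop :=
  IsCoveringMap p ∧ ∀ x, (p ⁻¹' {x}).encard = (k : ℕ∞)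

/-- Hurewicz fibration: the homotopy lifting property with respect to all spaces. -/
def IsHurewiczFibration {E : Type u} {B : Type v} [TopologicalSpace E] [TopologicalSpace B]
    (p : E → B) : Prop :=
  ∀ (Z : Type max u v) (_ : TopologicalSpace Z) (H : C(Z × I, B)) (h : C(Z, E)),
    (∀ z, p (h z) = H (z, 0)) →
      ∃ L : C(Z × I, E), (∀ z, L (z, 0) = h z) ∧ ∀ q, p (L q) = H q
/-- The permutation equivalence relation on `k`-tuples. -/
def symPowSetoid (E : Type u) (k : ℕ) : Setoid (Fin k → E) where
  r u v := ∃ ρ : Equiv.Perm (Fin k), u ∘ ρ = v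
  iseqv := by
    constructor
    · exact fun u => ⟨Equiv.refl _, rfl⟩
    · rintro u v ⟨ρ, h⟩
      refine ⟨ρ.symm, ?_⟩
      funext i
      rw [← h]
      simp
    · rintro u v w ⟨ρ, h⟩ ⟨ρ2, h'⟩
      refine ⟨ρ2.trans ρ, ?_⟩
      funext i
      rw [← h', ← h]
      rfl

/-- The `k`-th symmetric power `Symᵏ(E) = Eᵏ/Σₖ`, with the quotient topology of the
`k`-fold product. -/
def SymPow (E : Type u) [TopologicalSpace E] (k : ℕ) : Type u :=
  Quotient (symPowSetoid E k)

instance (E : Type u) [TopologicalSpace E] (k : ℕ) : TopologicalSpace (SymPow E k) :=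
  inferInstanceAs (TopologicalSpace (Quotient (symPowSetoid E k)))


/-!
Over an evenly covered neighbourhood `U` of `x₀`, a trivialization
`p⁻¹(U) ≅ U × p⁻¹(x₀)` enumerates every fiber over `U` by transporting one fixed enumeration
of `p⁻¹(x₀)`, and this enumeration depends continuously on `x`. Any two enumerations of a
`k`-element set differ by a permutation, so over `U` the fiber map agrees with the continuous
composite `U → Eᵏ → Symᵏ(E)`.
-/

theorem Set.nonempty_equiv_fin_of_encard_eq {α : Type*} {s : Set α} {k : ℕ}
    (h : s.encard = k) : Nonempty (s ≃ Fin k) := by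
  have hs : s.Finite := Set.finite_of_encard_eq_coe h
  have : Finite s := hs
  refine ⟨Finite.equivFinOfCardEq ?_⟩
  rw [Nat.card_coe_set_eq]
  exact_mod_cast hs.cast_ncard_eq.trans h

theorem symPowSetoid_mk_val_comp_symm_eq {E : Type*} {k : ℕ} {s : Set E} (e e' : s ≃ Fin k) :
    Quotient.mk (symPowSetoid E k) (Subtype.val ∘ e.symm) =
      Quotient.mk (symPowSetoid E k) (Subtype.val ∘ e'.symm) :=
  Quotient.sound ⟨e'.symm.trans e, by ext i; simp⟩

theorem Bundle.Trivialization.continuousOn_symPow_fiber {E X F : Type*} [TopologicalSpace E]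
    [TopologicalSpace X] [TopologicalSpace F] {p : E → X} {k : ℕ} (t : Trivialization F p)
    (c : F ≃ Fin k) (e : ∀ x, p ⁻¹' {x} ≃ Fin k) :
    ContinuousOn (fun x => (Quotient.mk (symPowSetoid E k) (Subtype.val ∘ (e x).symm) :
      SymPow E k)) t.baseSet := by
  have hlift : ContinuousOn (fun x i => t.toOpenPartialHomeomorph.symm (x, c.symm i)) t.baseSet :=
    continuousOn_pi.2 fun _ => t.toOpenPartialHomeomorph.continuousOn_symm.comp
      (Continuous.prodMk_left _).continuousOn fun _ hx => t.mem_target.2 hx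
  refine (continuous_quot_mk.comp_continuousOn hlift).congr fun x hx => ?_
  exact symPowSetoid_mk_val_comp_symm_eq (e x) ((t.preimageSingletonHomeomorph hx).toEquiv.trans c)

theorem covering_fiber_continuous_general {E X : Type u}
    [TopologicalSpace E] [TopologicalSpace X]
    (p : E → X) (k : ℕ) (hcov : IsCoveringOfDegree p k) :
    ∃ q : X → SymPow E k, Continuous q ∧
      ∀ x : X, ∃ u : Fin k → E, q x = Quotient.mk (symPowSetoid E k) u ∧
        Function.Injective u ∧ Set.range u = p ⁻¹' {x} := by
  have e : ∀ x, p ⁻¹' {x} ≃ Fin k :=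
    fun x => (Set.nonempty_equiv_fin_of_encard_eq (hcov.2 x)).some
  refine ⟨fun x => Quotient.mk _ (Subtype.val ∘ (e x).symm),
    continuous_iff_continuousAt.2 fun x₀ => ?_, fun x => ⟨_, rfl,
      Subtype.val_injective.comp (e x).symm.injective, by
        rw [EquivLike.range_comp, Subtype.range_coe]⟩⟩
  -- `toTrivialization` needs a nonempty fiber; for `k = 0` the space of tuples is a point.
  rcases isEmpty_or_nonempty (Fin k) with hk | hk
  · exact continuousAt_const.congr
      (.of_forall fun _ =>
        congrArg (Quotient.mk _) (Subsingleton.elim (Subtype.val ∘ (e x₀).symm) _))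
  have : Nonempty (p ⁻¹' {x₀}) := (e x₀).nonempty
  let t := (hcov.1 x₀).toTrivialization
  exact (t.continuousOn_symPow_fiber (e x₀) e).continuousAt
    (t.open_baseSet.mem_nhds (hcov.1 x₀).mem_toTrivialization_baseSet)

/-- For a degree-`k` covering map `p : E → X`, the assignment `x ↦ p⁻¹(x)` defines a
continuous map `X → Symᵏ(E)`. -/
theorem covering_fiber_continuous {E X : Type u}
    [TopologicalSpace E] [TopologicalSpace X] [T2Space E] [T2Space X]
    [CompactlyGeneratedSpace E] [CompactlyGeneratedSpace X]
    (p : E → X) (k : ℕ) (hcov : IsCoveringOfDegree p k) :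
    ∃ q : X → SymPow E k, Continuous q ∧
      ∀ x : X, ∃ u : Fin k → E, q x = Quotient.mk (symPowSetoid E k) u ∧
        Function.Injective u ∧ Set.range u = p ⁻¹' {x} :=
  covering_fiber_continuous_general p k hcov

end
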